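/- Let n ≥ 4 be an integer. Let K_{6n} be given a red/blue edge-coloring that is (F_n, K_4)-free and suppose its vertex set is partitioned into three pairwise disjoint red cliques G_1, G_2, G_3 each of order 2n. Let w be a new vertex joined to some vertices of K_{6n} with red/blue colored edges such that the resulting coloring is still (F_n, K_4)-free. Then for each i ∈ {1,2,3}, the vertex w is joined by a red edge to at most one vertex of G_i. -/

import Mathlib

open SimpleGraph

/-- The fan graph `Fₙ`: the join of a single vertex (the center, `none`) with `n`
pairwise disjoint edges (`some (i, a)` is matched with `some (i, !a)`). -/
def Fan (n : ℕ) : SimpleGraph (Option (Fin n × Bool)) where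
  Adj u v := u ≠ v ∧ (u = none ∨ v = none ∨ ∃ i a b, u = some (i, a) ∧ v = some (i, b))
  symm := by
    refine ⟨?_⟩
    rintro u v ⟨h1, h2⟩
    exact ⟨h1.symm, by tauto⟩
  loopless := by refine ⟨?_⟩; rintro u ⟨h1, -⟩; exact h1 rfl

/-- `G` contains a subgraph isomorphic to the fan graph `Fₙ`. -/
def ContainsFan {V : Type*} (G : SimpleGraph V) (n : ℕ) : Prop :=
  ∃ f : Option (Fin n × Bool) ↪ V, ∀ u v, (Fan n).Adj u v → G.Adj (f u) (f v)

/-- `G` contains a subgraph isomorphic to `K₄`. -/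
def ContainsK4 {V : Type*} (G : SimpleGraph V) : Prop :=
  ∃ a b c d : V, G.Adj a b ∧ G.Adj a c ∧ G.Adj a d ∧ G.Adj b c ∧ G.Adj b d ∧ G.Adj c d

/-- Extend a graph on `V` by one extra vertex (`none`) joined to the set `S`. -/
def extendGraph {V : Type*} (G : SimpleGraph V) (S : Set V) : SimpleGraph (Option V) where
  Adj u v :=
    match u, v with
    | some a, some b => G.Adj a b
    | none, some a => a ∈ S
    | some a, none => a ∈ S
    | none, none => False
  symm := by refine ⟨?_⟩; rintro (_ | a) (_ | b) h <;> first | exact h | exact G.adj_symm h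
  loopless := by refine ⟨?_⟩; rintro (_ | a) h; exacts [h, G.irrefl h]


/-!
If `w` had two red neighbours `x ≠ y` in the red clique `G i`, then `x` would be the center of
a red `Fₙ` in the extended coloring: one triangle is `x w y`, and the remaining `2n - 2`
vertices of `G i` pair up into `n - 1` further red triangles through `x`.
-/

section

variable {V : Type*} {G : SimpleGraph V}

theorem containsFan_of_leaves {ι : Type*} {n : ℕ} (e : Fin n ≃ ι)
    (c : V) (f : ι × Bool ↪ V) (hfc : ∀ p, f p ≠ c) (hc : ∀ p, G.Adj c (f p))
    (hpair : ∀ i, G.Adj (f (i, false)) (f (i, true))) : ContainsFan G n := by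
  have hpair' : ∀ i a b, a ≠ b → G.Adj (f (i, a)) (f (i, b)) := by
    rintro i (_ | _) (_ | _) hab
    exacts [absurd rfl hab, hpair i, (hpair i).symm, absurd rfl hab]
  refine ⟨⟨fun u => u.elim c fun p => f (e p.1, p.2), ?_⟩, ?_⟩
  · rintro (_ | ⟨i, a⟩) (_ | ⟨j, b⟩) h
    · rfl
    · exact absurd h.symm (hfc _)
    · exact absurd h (hfc _)
    · have hij := f.injective h
      simp only [Prod.mk.injEq, e.apply_eq_iff_eq] at hij
      rw [hij.1, hij.2]
  · rintro (_ | ⟨i, a⟩) (_ | ⟨j, b⟩) ⟨hne, h⟩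
    · exact absurd rfl hne
    · exact hc _
    · exact (hc _).symm
    · obtain ⟨k, a', b', hk, hk'⟩ := h.resolve_left (by simp) |>.resolve_left (by simp)
      simp only [Option.some.injEq, Prod.mk.injEq] at hk hk'
      obtain ⟨rfl, rfl⟩ := hk
      obtain ⟨rfl, rfl⟩ := hk'
      exact hpair' _ _ _ fun hab => hne (by simp only at hab; rw [hab])

theorem containsFan_of_isClique_of_adj [DecidableEq V] {n : ℕ}
    {s : Finset V} {c w y : V} (hs : G.IsClique ↑s) (hcard : 2 * n ≤ s.card) (hc : c ∈ s)
    (hy : y ∈ s) (hcy : c ≠ y) (hw : w ∉ s) (hwc : G.Adj w c) (hwy : G.Adj w y) :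
    ContainsFan G n := by
  obtain _ | m := n
  · exact containsFan_of_leaves (Equiv.refl _) c Function.Embedding.ofIsEmpty
      (fun p => p.1.elim0) (fun p => p.1.elim0) (fun i => i.elim0)
  set t := (s.erase c).erase y
  have ht : 2 * m ≤ t.card := by
    rw [Finset.card_erase_of_mem (Finset.mem_erase.mpr ⟨hcy.symm, hy⟩),
      Finset.card_erase_of_mem hc]
    omega
  obtain ⟨g⟩ : Nonempty (Fin m × Bool ↪ t) :=
    Function.Embedding.nonempty_of_card_le (by simpa [mul_comm] using ht)
  have hgy : ∀ p, (g p : V) ≠ y := fun p => Finset.ne_of_mem_erase (g p).2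
  have hgc : ∀ p, (g p : V) ≠ c := fun p =>
    Finset.ne_of_mem_erase (Finset.mem_of_mem_erase (g p).2)
  have hgs : ∀ p, (g p : V) ∈ s := fun p =>
    Finset.mem_of_mem_erase (Finset.mem_of_mem_erase (g p).2)
  have hwy' : w ≠ y := fun h => hw (h ▸ hy)
  have hgw : ∀ p, (g p : V) ≠ w := fun p h => hw (h ▸ hgs p)
  let f : Option (Fin m) × Bool → V := fun p => p.1.elim (cond p.2 y w) fun j => g (j, p.2)
  refine containsFan_of_leaves (finSuccEquiv m) c ⟨f, ?_⟩ ?_ ?_ ?_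
  · rintro ⟨_ | i, _ | _⟩ ⟨_ | j, _ | _⟩ h <;> simp_all [f]
  · rintro ⟨_ | i, _ | _⟩
    exacts [hwc.ne, hcy.symm, hgc _, hgc _]
  · rintro ⟨_ | i, _ | _⟩
    exacts [hwc.symm, hs hc hy hcy, hs hc (hgs _) (hgc _).symm, hs hc (hgs _) (hgc _).symm]
  · rintro (_ | i)
    · exact hwy
    · exact hs (hgs _) (hgs _) fun h => by simpa using g.injective (Subtype.ext h)

theorem isClique_extendGraph_image_some {s : Set V}
    (hs : G.IsClique s) (S : Set V) : (extendGraph G S).IsClique (some '' s) := by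
  rintro _ ⟨a, ha, rfl⟩ _ ⟨b, hb, rfl⟩ hab
  exact hs ha hb (ne_of_apply_ne some hab)

end

theorem at_most_one_red_per_part_general (n : ℕ)
    (R : SimpleGraph (Fin (6 * n)))
    (G : Fin 3 → Finset (Fin (6 * n)))
    (hcard : ∀ i, (G i).card = 2 * n)
    (hclique : ∀ i, R.IsClique ↑(G i))
    (RedN BlueN : Finset (Fin (6 * n)))
    (hfree' : ¬ ContainsFan (extendGraph R ↑RedN) n ∧
      ¬ ContainsK4 (extendGraph Rᶜ ↑BlueN)) :
    ∀ i, (RedN ∩ G i).card ≤ 1 := by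
  intro i
  by_contra! h
  obtain ⟨x, hx, y, hy, hxy⟩ := Finset.one_lt_card.mp h
  rw [Finset.mem_inter] at hx hy
  refine hfree'.1 <| containsFan_of_isClique_of_adj (s := (G i).map .some) (c := some x)
    (w := none) (y := some y) ?_ (by simp [hcard]) (by simpa using hx.2) (by simpa using hy.2)
    (by simpa using hxy) (by simp) hx.1 hy.1
  rw [Finset.coe_map]
  exact isClique_extendGraph_image_some (hclique i) _

/-- Let `K_{6n}` carry an `(Fₙ, K₄)`-free coloring partitioned into three red
cliques `G 0, G 1, G 2` of order `2n`, and extend it by a new vertex `w` with red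
neighbors `RedN` and blue neighbors `BlueN`, still `(Fₙ, K₄)`-free. Then `w` has at
most one red neighbor in each `G i`. -/
theorem at_most_one_red_per_part (n : ℕ) (hn : 4 ≤ n)
    (R : SimpleGraph (Fin (6 * n)))
    (hfree : ¬ ContainsFan R n ∧ ¬ ContainsK4 Rᶜ)
    (G : Fin 3 → Finset (Fin (6 * n)))
    (hcard : ∀ i, (G i).card = 2 * n)
    (hdisj : ∀ i j, i ≠ j → Disjoint (G i) (G j))
    (hcover : ∀ v, ∃ i, v ∈ G i)
    (hclique : ∀ i, R.IsClique ↑(G i))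
    (RedN BlueN : Finset (Fin (6 * n))) (hdisjN : Disjoint RedN BlueN)
    (hfree' : ¬ ContainsFan (extendGraph R ↑RedN) n ∧
      ¬ ContainsK4 (extendGraph Rᶜ ↑BlueN)) :
    ∀ i, (RedN ∩ G i).card ≤ 1 :=
  at_most_one_red_per_part_general n R G hcard hclique RedN BlueN hfree'
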